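/- Let $K$ be an algebraically closed field of characteristic $0$ and $(M, Q')$ a nondegenerate quadratic space with orthogonal decomposition $M = M_{a,0} \oplus M_{b,0} \oplus B$, where $B$ is a hyperbolic plane with isotropic basis $w, w'$, and let $\nu(t)$ act by $t^{-1}$ on $w$, by $t$ on $w'$, and trivially on $M_0 = M_{a,0} \oplus M_{b,0}$. Suppose $(M_b, \varphi_b) = (M_{b,0} \oplus B, \varphi_{b,0} \oplus \varphi_B)$ is an Hermitian space over $K \times K$ respecting $Q'|_{M_b}$. If $G \subseteq \mathrm{SO}(M)$ is a connected reductive subgroup containing $\mathrm{im}\,\nu$ such that (1) $G_0 := G \cap \mathrm{SO}(M_0) \subseteq \mathrm{SO}(M_{a,0}) \times \mathrm{SU}(\varphi_{b,0})$, and (2) the unipotent subgroup $U_{G,\nu}$ equals $U_{\mathrm{SO}(M_a),\nu} \times U_{\mathrm{SU}(\varphi_b),\nu}$ where $M_a = M_{a,0} \oplus B$, then either $M_{a,0} = 0$ and $G = \mathrm{SU}(\varphi_b)$, or $M_{b,0} = 0$ and $G = \mathrm{SO}(M)$. -/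

import Mathlib

section

variable {K M : Type*} [Field K] [AddCommGroup M] [Module K M]

/-- `x` is skew-adjoint with respect to the bilinear form `Bf`,
i.e. lies in the Lie algebra `so(M, Bf)`. -/
def SkewAdjEnd (Bf : M →ₗ[K] M →ₗ[K] K) (x : Module.End K M) : Prop :=
  ∀ u v : M, Bf (x u) v + Bf u (x v) = 0

/-- `x` lies in the sum of the positive weight spaces (weights `1` and `2`) for the
adjoint action of `D = dν`, i.e. in `Lie U_{ν}`. -/
def InPosPart (D x : Module.End K M) : Prop :=
  ⁅D, ⁅D, x⁆⁆ - (3 : K) • ⁅D, x⁆ + (2 : K) • x = 0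

end

/-!
Write `D = dν`; on `M` it is the skew endomorphism `wedge Bf w w' : m ↦ B(w,m) w' - B(w',m) w`.
On `so(M)` the operator `ad D` has eigenvalues `-1, 0, 1`, and the projections onto the
eigenspaces are polynomials in `ad D`, so `g = g₁ ⊕ g₀ ⊕ g₋₁` with `g₁ = U ∧ w'` and
`g₋₁ = S ∧ w` for subspaces `U, S` of `M₀ = ⟨w, w'⟩^⊥`; hypothesis (2) says
`U = M_{a,0} ⊕ (W_b ∩ M_{b,0})`, and `[U ∧ w', S ∧ w]` gives `u ∧ v ∈ g` for `u ∈ U`, `v ∈ S`.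

Reductivity enters only through one construction: if `P ⊆ M₀` is `g₀`-stable and
`S ⊆ P ⊆ S^⊥`, then `K w' ⊕ P` is `g`-stable; a `g`-stable complement is `D`-stable, hence
contains the `(-1)`-eigenvector `w`, hence `U = g₁ w`. This gives `U ∩ P = 0`, `U` isotropic
and `M₀ = P + U^⊥`, and by the symmetry `w ↔ w'` the same with `U` and `S` exchanged.

Condition (1) says that the elements `u ∧ v` of `g₀` preserve `M_{b,0}` and `W_b' ∩ M_{b,0}`.
If `M_{a,0}` and `M_{b,0}` are both nonzero this forces `S = 0`, and then `P = U` gives `U = 0`.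
If `M_{b,0} = 0` then `U = M₀`, so `S = M₀` (with `P = S^⊥` when `S` is isotropic) and `g`
contains every `u ∧ v`, hence is `so(M)`. If `M_{a,0} = 0` it forces `S = W_b' ∩ M_{b,0}`, so
`g` contains `W_b' ∧ W_b`, which spans `su(φ_b)` together with `D` and `g₁ ⊕ g₋₁`.
-/


open Submodule

section

attribute [local instance] LieRing.ofAssociativeRing LieAlgebra.ofAssociativeAlgebra

variable {K M : Type*} [Field K] [AddCommGroup M] [Module K M] {Bf : M →ₗ[K] M →ₗ[K] K}
  {w w' u v m : M} {x y z : Module.End K M} {g : Submodule K (Module.End K M)}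
  {A B P W W' Ma Mb Wb Wb' : Submodule K M}

namespace SkewAdjEnd

theorem add (hx : SkewAdjEnd Bf x) (hy : SkewAdjEnd Bf y) : SkewAdjEnd Bf (x + y) :=
  fun u v => by
    simp only [LinearMap.add_apply, map_add]
    linear_combination hx u v + hy u v

theorem smul (c : K) (hx : SkewAdjEnd Bf x) : SkewAdjEnd Bf (c • x) := fun u v => by
  simp only [LinearMap.smul_apply, map_smul, LinearMap.smul_apply, smul_eq_mul]
  linear_combination c * hx u v

theorem sub (hx : SkewAdjEnd Bf x) (hy : SkewAdjEnd Bf y) : SkewAdjEnd Bf (x - y) := by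
  simpa only [sub_eq_add_neg, neg_one_smul] using hx.add (hy.smul (-1))

theorem apply_right (hx : SkewAdjEnd Bf x) (u v : M) : Bf u (x v) = -Bf (x u) v := by
  linear_combination hx u v

theorem apply_self_eq_zero [CharZero K] (hsymm : ∀ u v, Bf u v = Bf v u) (hx : SkewAdjEnd Bf x)
    (u : M) : Bf u (x u) = 0 := by
  have h := hx u u
  rw [hsymm (x u)] at h
  linear_combination h / 2

end SkewAdjEnd

variable (Bf) in
def wedge : M →ₗ[K] M →ₗ[K] Module.End K M :=
  LinearMap.mk₂ K (fun u v => (Bf u).smulRight v - (Bf v).smulRight u)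
    (fun u u' v => by ext; simp only [map_add]; simp [add_smul]; abel)
    (fun c u v => by ext; simp [smul_smul, mul_comm, smul_sub])
    (fun u v v' => by ext; simp; module)
    (fun c u v => by ext; simp [smul_smul, mul_comm, smul_sub])

@[simp]
theorem wedge_apply (u v m : M) : wedge Bf u v m = Bf u m • v - Bf v m • u := rfl

theorem wedge_comm (u v : M) : wedge Bf u v = -wedge Bf v u := by
  ext m; simp

theorem skewAdjEnd_wedge (hsymm : ∀ u v, Bf u v = Bf v u) (u v : M) :
    SkewAdjEnd Bf (wedge Bf u v) := fun x y => by
  simp only [wedge_apply, map_sub, map_smul, LinearMap.sub_apply, LinearMap.smul_apply,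
    smul_eq_mul]
  rw [hsymm u x, hsymm v x]
  ring

theorem lie_wedge (hx : SkewAdjEnd Bf x) (u v : M) :
    ⁅x, wedge Bf u v⁆ = wedge Bf (x u) v + wedge Bf u (x v) := by
  ext m
  simp only [Ring.lie_def, LinearMap.sub_apply, Module.End.mul_apply, LinearMap.add_apply,
    wedge_apply, map_sub, map_smul, hx.apply_right]
  module

theorem wedge_lie (hx : SkewAdjEnd Bf x) (u v : M) :
    ⁅wedge Bf u v, x⁆ = wedge Bf (x v) u - wedge Bf (x u) v := by
  rw [← lie_skew (wedge Bf u v) x, lie_wedge hx, wedge_comm u (x v)]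
  abel

theorem wedge_apply_mem_left (hW : ∀ x ∈ W, ∀ y ∈ W, Bf x y = 0)
    {a : M} (ha : a ∈ W) (hm : m ∈ W) (b : M) : wedge Bf a b m ∈ W := by
  rw [wedge_apply, hW a ha m hm, zero_smul, zero_sub]
  exact neg_mem (smul_mem _ _ ha)

theorem wedge_apply_mem_right (hW : ∀ x ∈ W, ∀ y ∈ W, Bf x y = 0)
    {b : M} (hb : b ∈ W) (hm : m ∈ W) (a : M) : wedge Bf a b m ∈ W := by
  rw [wedge_comm, LinearMap.neg_apply]
  exact neg_mem (wedge_apply_mem_left hW hb hm a)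

variable (Bf) in
def pairOrth (w w' : M) : Submodule K M := LinearMap.ker (Bf w) ⊓ LinearMap.ker (Bf w')

@[simp]
theorem mem_pairOrth : m ∈ pairOrth Bf w w' ↔ Bf w m = 0 ∧ Bf w' m = 0 := Iff.rfl

theorem pairOrth_comm : pairOrth Bf w' w = pairOrth Bf w w' := inf_comm _ _

theorem SkewAdjEnd.apply_mem_pairOrth (hz : SkewAdjEnd Bf z) (hzw : z w = 0) (hzw' : z w' = 0)
    (m : M) : z m ∈ pairOrth Bf w w' := by
  simp [hz.apply_right, hzw, hzw']

theorem wedge_apply_of_mem_pairOrth (hm : m ∈ pairOrth Bf w w') : wedge Bf w w' m = 0 := by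
  simp [(mem_pairOrth.mp hm).1, (mem_pairOrth.mp hm).2]

theorem lie_wedge_swap_eq_zero : ⁅wedge Bf w' w, y⁆ = 0 ↔ ⁅wedge Bf w w', y⁆ = 0 := by
  rw [wedge_comm w' w, neg_lie, neg_eq_zero]

variable (Bf) in
/-- The weight-one component of `x` under `ad (wedge Bf w w')` is
`wedge Bf (posCoeff Bf w w' x) w'`. -/
def posCoeff (w w' : M) (x : Module.End K M) : M := Bf w' (x w) • w - x w

variable (Bf) in
def zeroPart (w w' : M) (x : Module.End K M) : Module.End K M :=
  x - wedge Bf (posCoeff Bf w w' x) w' - wedge Bf (posCoeff Bf w' w x) w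

theorem eq_wedge_add_wedge_add_zeroPart (x : Module.End K M) :
    x = wedge Bf (posCoeff Bf w w' x) w' + wedge Bf (posCoeff Bf w' w x) w +
      zeroPart Bf w w' x := by
  unfold zeroPart
  abel

theorem zeroPart_swap : zeroPart Bf w' w x = zeroPart Bf w w' x := sub_right_comm _ _ _

theorem inPosPart_of_lie_eq_self {D : Module.End K M} (h : ⁅D, x⁆ = x) : InPosPart D x := by
  unfold InPosPart
  rw [h, h]
  module

variable (Bf) in
structure IsHyperbolicPair (w w' : M) : Prop where
  symm : ∀ u v, Bf u v = Bf v u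
  isotropic_left : Bf w w = 0
  isotropic_right : Bf w' w' = 0
  pairing : Bf w w' = 1

namespace IsHyperbolicPair

theorem swap (hP : IsHyperbolicPair Bf w w') : IsHyperbolicPair Bf w' w :=
  ⟨hP.symm, hP.isotropic_right, hP.isotropic_left, by rw [hP.symm]; exact hP.pairing⟩

theorem right_ne_zero (hP : IsHyperbolicPair Bf w w') : w' ≠ 0 := by
  rintro rfl
  simpa using hP.pairing

theorem wedge_apply_left (hP : IsHyperbolicPair Bf w w') : wedge Bf w w' w = -w := by
  simp [hP.isotropic_left, hP.swap.pairing]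

theorem wedge_apply_right (hP : IsHyperbolicPair Bf w w') : wedge Bf w w' w' = w' := by
  simp [hP.isotropic_right, hP.pairing]

theorem wedge_apply_left_of_mem (hP : IsHyperbolicPair Bf w w') (hu : u ∈ pairOrth Bf w w') :
    wedge Bf u w' w = -u := by
  simp [hP.symm u w, (mem_pairOrth.mp hu).1, hP.swap.pairing]

theorem sub_mem_pairOrth (hP : IsHyperbolicPair Bf w w') (m : M) :
    m - Bf w' m • w - Bf w m • w' ∈ pairOrth Bf w w' := by
  simp [hP.isotropic_left, hP.isotropic_right, hP.pairing, hP.swap.pairing]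

theorem ext (hP : IsHyperbolicPair Bf w w') (hw : x w = y w) (hw' : x w' = y w')
    (h : ∀ m ∈ pairOrth Bf w w', x m = y m) : x = y := by
  ext m
  have hm := h _ (hP.sub_mem_pairOrth m)
  simp only [map_sub, map_smul, hw, hw'] at hm
  simpa using hm

theorem eq_zero_of_mem_pairOrth (hP : IsHyperbolicPair Bf w w')
    (hnd : ∀ u : M, (∀ v, Bf u v = 0) → u = 0) (hu : u ∈ pairOrth Bf w w')
    (h : ∀ v ∈ pairOrth Bf w w', Bf u v = 0) : u = 0 :=
  hnd u fun v => by
    have hu' := mem_pairOrth.mp hu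
    simpa [hP.symm u w, hP.symm u w', hu'.1, hu'.2] using h _ (hP.sub_mem_pairOrth v)

theorem disjoint_span_pairOrth (hP : IsHyperbolicPair Bf w w') :
    Disjoint (span K {w, w'}) (pairOrth Bf w w') := by
  refine disjoint_def.mpr fun s hs hs0 => ?_
  obtain ⟨a, b, rfl⟩ := mem_span_pair.mp hs
  have h := mem_pairOrth.mp hs0
  simp only [map_add, map_smul, hP.isotropic_left, hP.isotropic_right, hP.pairing,
    hP.swap.pairing, smul_eq_mul, mul_zero, mul_one, zero_add, add_zero] at h
  simp [h.1, h.2]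

theorem eq_pairOrth_of_isCompl (hP : IsHyperbolicPair Bf w w') {N : Submodule K M}
    (hN : N ≤ pairOrth Bf w w') (hc : IsCompl (span K {w, w'}) N) : N = pairOrth Bf w w' := by
  refine le_antisymm hN fun m hm => ?_
  obtain ⟨s, hs, n, hn, rfl⟩ := mem_sup.mp (hc.sup_eq_top ▸ mem_top : m ∈ span K {w, w'} ⊔ N)
  have hs0 : s = 0 := disjoint_def.mp hP.disjoint_span_pairOrth s hs
    (by simpa using sub_mem hm (hN hn))
  simpa [hs0] using hn

theorem eq_wedge (hP : IsHyperbolicPair Bf w w') {D : Module.End K M}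
    (hM0 : Ma ⊔ Mb = pairOrth Bf w w') (hDw : D w = -w) (hDw' : D w' = w')
    (hDa : ∀ v ∈ Ma, D v = 0) (hDb : ∀ v ∈ Mb, D v = 0) : D = wedge Bf w w' := by
  refine hP.ext (by rw [hDw, hP.wedge_apply_left]) (by rw [hDw', hP.wedge_apply_right])
    fun m hm => ?_
  obtain ⟨a, ha, b, hb, rfl⟩ := mem_sup.mp (hM0 ▸ hm)
  rw [map_add, hDa a ha, hDb b hb, add_zero, wedge_apply_of_mem_pairOrth hm]

theorem lie_wedge_eq_zero (hP : IsHyperbolicPair Bf w w') (hu : u ∈ pairOrth Bf w w')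
    (hv : v ∈ pairOrth Bf w w') : ⁅wedge Bf w w', wedge Bf u v⁆ = 0 := by
  rw [lie_wedge (skewAdjEnd_wedge hP.symm w w'), wedge_apply_of_mem_pairOrth hu,
    wedge_apply_of_mem_pairOrth hv]
  simp

theorem lie_wedge_eq_self (hP : IsHyperbolicPair Bf w w') (hu : u ∈ pairOrth Bf w w') :
    ⁅wedge Bf w w', wedge Bf u w'⁆ = wedge Bf u w' := by
  rw [lie_wedge (skewAdjEnd_wedge hP.symm w w'), wedge_apply_of_mem_pairOrth hu,
    hP.wedge_apply_right]
  simp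

theorem skewAdjEnd_zeroPart (hP : IsHyperbolicPair Bf w w') (hx : SkewAdjEnd Bf x) :
    SkewAdjEnd Bf (zeroPart Bf w w' x) :=
  (hx.sub (skewAdjEnd_wedge hP.symm _ _)).sub (skewAdjEnd_wedge hP.symm _ _)

end IsHyperbolicPair

variable (Bf) in
structure IsSkewLieSubalgebra (g : Submodule K (Module.End K M)) : Prop where
  lie_mem : ∀ x ∈ g, ∀ y ∈ g, ⁅x, y⁆ ∈ g
  skewAdjEnd : ∀ x ∈ g, SkewAdjEnd Bf x

def IsInvariantUnder (g : Submodule K (Module.End K M)) (N : Submodule K M) : Prop :=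
  ∀ x ∈ g, ∀ v ∈ N, x v ∈ N

def IsCompletelyReducible (g : Submodule K (Module.End K M)) : Prop :=
  ∀ N : Submodule K M, IsInvariantUnder g N → ∃ N', IsCompl N N' ∧ IsInvariantUnder g N'

variable (Bf) in
/-- For `D = wedge Bf w w'`, the weight-one part of `g` is `wedge Bf (wedgeSpace Bf g w w') w'`
and its weight-minus-one part is `wedge Bf (wedgeSpace Bf g w' w) w`. -/
def wedgeSpace (g : Submodule K (Module.End K M)) (w w' : M) : Submodule K M :=
  pairOrth Bf w w' ⊓ g.comap ((wedge Bf).flip w')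

@[simp]
theorem mem_wedgeSpace : u ∈ wedgeSpace Bf g w w' ↔ u ∈ pairOrth Bf w w' ∧ wedge Bf u w' ∈ g :=
  Iff.rfl

theorem wedge_swap_mem (hD : wedge Bf w w' ∈ g) : wedge Bf w' w ∈ g := by
  rw [wedge_comm]
  exact neg_mem hD

theorem IsHyperbolicPair.wedge_mem (hP : IsHyperbolicPair Bf w w') (hg : IsSkewLieSubalgebra Bf g)
    (hD : wedge Bf w w' ∈ g) (hu : u ∈ wedgeSpace Bf g w w') (hv : v ∈ wedgeSpace Bf g w' w) :
    wedge Bf u v ∈ g := by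
  obtain ⟨hu0, hug⟩ := mem_wedgeSpace.mp hu
  obtain ⟨hv0, hvg⟩ := mem_wedgeSpace.mp hv
  have hlie := hg.lie_mem _ hug _ hvg
  have hvw' : wedge Bf v w w' = -v := by
    simp [hP.symm v w', (mem_pairOrth.mp hv0).1, hP.pairing]
  have hvu : wedge Bf v w u = Bf v u • w := by
    simp [(mem_pairOrth.mp hu0).1]
  rw [wedge_lie (skewAdjEnd_wedge hP.symm v w), hvw', hvu, map_neg, map_smul,
    LinearMap.neg_apply, LinearMap.smul_apply, ← wedge_comm] at hlie
  simpa using add_mem hlie (smul_mem g (Bf v u) hD)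

theorem mem_of_isCompl_of_apply_eq_smul {D : Module.End K M} {N N' : Submodule K M}
    (hc : IsCompl N N') (hN : ∀ n ∈ N, D n ∈ N) (hN' : ∀ n ∈ N', D n ∈ N') {c : K}
    (hv : D v = c • v) (hNc : ∀ n ∈ N, D n = c • n → n = 0) : v ∈ N' := by
  obtain ⟨n, hn, n', hn', rfl⟩ := mem_sup.mp (hc.sup_eq_top ▸ mem_top : v ∈ N ⊔ N')
  have hsplit : D n - c • n = -(D n' - c • n') := by
    rw [map_add] at hv
    linear_combination (norm := module) hv
  have h0 : D n - c • n = 0 := disjoint_def.mp hc.disjoint _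
    (sub_mem (hN n hn) (smul_mem _ _ hn))
    (hsplit ▸ neg_mem (sub_mem (hN' n' hn') (smul_mem _ _ hn')))
  rw [hNc n hn (sub_eq_zero.mp h0), zero_add]
  exact hn'

theorem exists_dualFamily [FiniteDimensional K M] {Q Q' : Submodule K M}
    (h : ∀ u ∈ Q, (∀ v ∈ Q', Bf u v = 0) → u = 0)
    (h' : ∀ v ∈ Q', (∀ u ∈ Q, Bf u v = 0) → v = 0) :
    ∃ (n : ℕ) (b f : Fin n → M), (∀ i, b i ∈ Q) ∧ (∀ i, f i ∈ Q') ∧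
      (∀ m ∈ Q, ∑ i, Bf m (f i) • b i = m) ∧ (∀ m ∈ Q', ∑ i, Bf (b i) m • f i = m) := by
  let p : Q' →ₗ[K] Q →ₗ[K] K := (Bf.compl₁₂ Q.subtype Q'.subtype).flip
  have hinj : Function.Injective p := fun v v' hv => Subtype.ext <| sub_eq_zero.mp <|
    h' _ (sub_mem v.2 v'.2) fun u hu => by
      simpa [p, sub_eq_zero] using LinearMap.congr_fun hv ⟨u, hu⟩
  have hinj' : Function.Injective p.flip := fun u u' hu => Subtype.ext <| sub_eq_zero.mp <|
    h _ (sub_mem u.2 u'.2) fun v hv => by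
      simpa [p, sub_eq_zero] using LinearMap.congr_fun hu ⟨v, hv⟩
  have := LinearMap.IsPerfPair.of_injective hinj hinj'
  let b := Module.finBasis K Q
  let f : Fin _ → Q' := fun i => p.toPerfPair.symm (b.coord i)
  have hf : ∀ i u (hu : u ∈ Q), Bf u (f i) = b.repr ⟨u, hu⟩ i := fun i u hu =>
    LinearMap.congr_fun (p.apply_symm_toPerfPair_self (b.coord i)) ⟨u, hu⟩
  refine ⟨_, fun i => b i, fun i => f i, fun i => (b i).2, fun i => (f i).2, ?_, ?_⟩
  · intro m hm
    have e := congrArg Q.subtype (b.sum_repr ⟨m, hm⟩)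
    simp only [map_sum, map_smul, Submodule.subtype_apply] at e
    simpa only [hf _ m hm] using e
  · intro m hm
    refine sub_eq_zero.mp (h' _ (sub_mem (sum_mem fun i _ => smul_mem _ _ (f i).2) hm) ?_)
    intro u hu
    have hu' := congrArg (fun x => Bf (Q.subtype x) m) (b.sum_repr ⟨u, hu⟩)
    simp only [map_sum, map_smul, LinearMap.sum_apply, LinearMap.smul_apply, smul_eq_mul,
      Submodule.subtype_apply] at hu'
    simp only [map_sub, map_sum, map_smul, smul_eq_mul, hf _ u hu, hu', mul_comm, sub_self]

theorem sum_wedge_apply {n : ℕ} (hz : SkewAdjEnd Bf z) (b f : Fin n → M) (m : M) :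
    (∑ i, wedge Bf (f i) (z (b i))) m = z (∑ i, Bf (f i) m • b i) + ∑ i, Bf (b i) (z m) • f i := by
  simp [LinearMap.sum_apply, hz.apply_right, map_sum, sub_eq_add_neg, Finset.sum_add_distrib]

variable (Bf) in
structure IsLagrangianSplitting (W W' : Submodule K M) : Prop where
  isotropic_left : ∀ x ∈ W, ∀ y ∈ W, Bf x y = 0
  isotropic_right : ∀ x ∈ W', ∀ y ∈ W', Bf x y = 0
  sup_eq_top : W ⊔ W' = ⊤

namespace IsLagrangianSplitting

theorem swap (hL : IsLagrangianSplitting Bf W W') : IsLagrangianSplitting Bf W' W :=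
  ⟨hL.isotropic_right, hL.isotropic_left, sup_comm W W' ▸ hL.sup_eq_top⟩

theorem sub_mem_inf (hL : IsLagrangianSplitting Bf W W') (hP : IsHyperbolicPair Bf w w')
    (hw : w ∈ W) (hm : m ∈ W) : m - Bf w' m • w ∈ W ⊓ pairOrth Bf w w' :=
  ⟨sub_mem hm (smul_mem _ _ hw), by
    simp [hL.isotropic_left w hw m hm, hP.isotropic_left, hP.swap.pairing]⟩

theorem pairOrth_le (hL : IsLagrangianSplitting Bf W W') (hw : w ∈ W) (hw' : w' ∈ W') :
    pairOrth Bf w w' ≤ W ⊓ pairOrth Bf w w' ⊔ W' ⊓ pairOrth Bf w w' := by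
  intro m hm
  obtain ⟨x, hx, x', hx', rfl⟩ := mem_sup.mp (hL.sup_eq_top ▸ mem_top : m ∈ W ⊔ W')
  have hm' := mem_pairOrth.mp hm
  have hwx' := hL.isotropic_right w' hw' x' hx'
  have hx0 : x ∈ pairOrth Bf w w' :=
    ⟨hL.isotropic_left w hw x hx, by simpa [hwx'] using hm'.2⟩
  have hx'0 : x' ∈ pairOrth Bf w w' := by simpa using sub_mem hm hx0
  exact add_mem_sup ⟨hx, hx0⟩ ⟨hx', hx'0⟩

theorem eq_zero_of_forall_mem_inf (hL : IsLagrangianSplitting Bf W W') (hP : IsHyperbolicPair Bf w w')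
    (hnd : ∀ u : M, (∀ v, Bf u v = 0) → u = 0) (hw' : w' ∈ W')
    (hu : u ∈ W ⊓ pairOrth Bf w w') (h : ∀ v ∈ W' ⊓ pairOrth Bf w w', Bf u v = 0) : u = 0 := by
  refine hnd u fun m => ?_
  obtain ⟨x, hx, x', hx', rfl⟩ := mem_sup.mp (hL.sup_eq_top ▸ mem_top : m ∈ W ⊔ W')
  have h' := h _ (pairOrth_comm (Bf := Bf) ▸ hL.swap.sub_mem_inf hP.swap hw' hx')
  simp only [map_sub, map_smul, hP.symm u w', (mem_pairOrth.mp hu.2).2, smul_zero,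
    sub_zero] at h'
  rw [map_add, hL.isotropic_left u hu.1 x hx, h', add_zero]

theorem disjoint (hL : IsLagrangianSplitting Bf W W')
    (hnd : ∀ u : M, (∀ v, Bf u v = 0) → u = 0) : Disjoint W W' := by
  refine disjoint_def.mpr fun u hu hu' => hnd u fun m => ?_
  obtain ⟨x, hx, x', hx', rfl⟩ := mem_sup.mp (hL.sup_eq_top ▸ mem_top : m ∈ W ⊔ W')
  rw [map_add, hL.isotropic_left u hu x hx, hL.isotropic_right u hu' x' hx', add_zero]

theorem wedge_apply_mem_left (hL : IsLagrangianSplitting Bf W W') {a b : M} (ha : a ∈ W)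
    (hv : v ∈ W) : wedge Bf a b v ∈ W :=
  _root_.wedge_apply_mem_left hL.isotropic_left ha hv b

theorem wedge_apply_mem_right (hL : IsLagrangianSplitting Bf W W') {a b : M} (hb : b ∈ W')
    (hv : v ∈ W') : wedge Bf a b v ∈ W' :=
  _root_.wedge_apply_mem_right hL.isotropic_right hb hv a

theorem mem_of_forall_wedge_mem [FiniteDimensional K M] (hL : IsLagrangianSplitting Bf W W')
    (hP : IsHyperbolicPair Bf w w') (hnd : ∀ u : M, (∀ v, Bf u v = 0) → u = 0) (hw : w ∈ W)
    (hw' : w' ∈ W')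
    (hwedge : ∀ v ∈ W' ⊓ pairOrth Bf w w', ∀ u ∈ W ⊓ pairOrth Bf w w', wedge Bf v u ∈ g)
    (hz : SkewAdjEnd Bf z) (hzw : z w = 0) (hzw' : z w' = 0) (hzW : ∀ m ∈ W, z m ∈ W)
    (hzW' : ∀ m ∈ W', z m ∈ W') : z ∈ g := by
  obtain ⟨n, b, f, hb, hf, hexp, hexp'⟩ := exists_dualFamily (Bf := Bf)
    (fun u hu h => hL.eq_zero_of_forall_mem_inf hP hnd hw' hu h)
    (fun v hv h => hL.swap.eq_zero_of_forall_mem_inf hP.swap hnd hw (pairOrth_comm (Bf := Bf) ▸ hv)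
      fun u hu => hP.symm v u ▸ h u (pairOrth_comm (Bf := Bf) ▸ hu))
  have hzb : ∀ i, z (b i) ∈ W ⊓ pairOrth Bf w w' := fun i =>
    ⟨hzW _ (hb i).1, hz.apply_mem_pairOrth hzw hzw' _⟩
  convert sum_mem fun i _ => hwedge _ (hf i) _ (hzb i) using 1
  refine hP.ext ?_ ?_ fun m hm => ?_ <;> rw [sum_wedge_apply hz]
  · simp [hzw, hP.symm _ w, fun i => (mem_pairOrth.mp (hf i).2).1]
  · simp [hzw', hP.symm _ w', fun i => (mem_pairOrth.mp (hf i).2).2]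
  obtain ⟨x, hx, x', hx', rfl⟩ := mem_sup.mp (hL.pairOrth_le hw hw' hm)
  have hfx' : ∀ i, Bf (f i) x' = 0 := fun i => hL.isotropic_right _ (hf i).1 _ hx'.1
  have hbzx : ∀ i, Bf (b i) (z x) = 0 := fun i => hL.isotropic_left _ (hb i).1 _ (hzW x hx.1)
  simp only [map_add, hfx', hbzx, add_zero, zero_add, hP.symm (f _) x, hexp x hx,
    hexp' _ ⟨hzW' x' hx'.1, hz.apply_mem_pairOrth hzw hzw' x'⟩]

end IsLagrangianSplitting

variable (Bf) in
/-- The right-hand side of hypothesis (2), `Lie U_{SO(M_a), ν} ⊕ Lie U_{SU(φ_b), ν}`,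
for `D = wedge Bf w w'`. -/
def unipotentSum (w w' : M) (Ma Mb Wb Wb' : Submodule K M) : Set (Module.End K M) :=
  {x | ∃ xa ∈ {y : Module.End K M | SkewAdjEnd Bf y ∧ InPosPart (wedge Bf w w') y ∧
      (∀ v ∈ Mb, y v = 0) ∧ ∀ v : M, y v ∈ Ma ⊔ span K {w, w'}},
    ∃ xb ∈ {y : Module.End K M | SkewAdjEnd Bf y ∧ InPosPart (wedge Bf w w') y ∧
      (∀ v ∈ Wb, y v ∈ Wb) ∧ (∀ v ∈ Wb', y v ∈ Wb') ∧ ∀ v ∈ Ma, y v = 0},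
    x = xa + xb}

section CharZero

variable [CharZero K]

namespace IsHyperbolicPair

theorem posCoeff_mem (hP : IsHyperbolicPair Bf w w') (hx : SkewAdjEnd Bf x) :
    posCoeff Bf w w' x ∈ pairOrth Bf w w' := by
  simp [posCoeff, hP.isotropic_left, hP.swap.pairing, hx.apply_self_eq_zero hP.symm]

theorem lie_lie_add_lie (hP : IsHyperbolicPair Bf w w') (hx : SkewAdjEnd Bf x) :
    ⁅wedge Bf w w', ⁅wedge Bf w w', x⁆⁆ + ⁅wedge Bf w w', x⁆ =
      (2 : K) • wedge Bf (posCoeff Bf w w' x) w' := by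
  have hD := skewAdjEnd_wedge hP.symm w w'
  have hcross : Bf w (x w') = -Bf w' (x w) := by
    rw [hx.apply_right, hP.symm]
  rw [wedge_lie hx, lie_sub, lie_wedge hD, lie_wedge hD, hP.wedge_apply_left,
    hP.wedge_apply_right]
  simp only [posCoeff, wedge_apply, hx.apply_self_eq_zero hP.symm, hcross, map_sub, map_smul,
    map_neg, map_zero, LinearMap.neg_apply, LinearMap.zero_apply, LinearMap.sub_apply,
    LinearMap.smul_apply, zero_smul, sub_zero, neg_smul, wedge_comm w' w]
  module

theorem lie_lie_sub_lie (hP : IsHyperbolicPair Bf w w') (hx : SkewAdjEnd Bf x) :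
    ⁅wedge Bf w w', ⁅wedge Bf w w', x⁆⁆ - ⁅wedge Bf w w', x⁆ =
      (2 : K) • wedge Bf (posCoeff Bf w' w x) w := by
  have h := hP.swap.lie_lie_add_lie hx
  simp only [wedge_comm w' w, neg_lie, lie_neg, neg_neg, ← sub_eq_add_neg] at h
  exact h

theorem lie_lie_lie (hP : IsHyperbolicPair Bf w w') (hx : SkewAdjEnd Bf x) :
    ⁅wedge Bf w w', ⁅wedge Bf w w', ⁅wedge Bf w w', x⁆⁆⁆ = ⁅wedge Bf w w', x⁆ := by
  have h := hP.lie_lie_add_lie hx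
  have h' := congrArg (⁅wedge Bf w w', ·⁆) h
  simp only [lie_add, lie_smul, hP.lie_wedge_eq_self (hP.posCoeff_mem hx)] at h'
  linear_combination (norm := module) h' - h

theorem lie_eq_self_of_inPosPart (hP : IsHyperbolicPair Bf w w') (hx : SkewAdjEnd Bf x)
    (h : InPosPart (wedge Bf w w') x) : ⁅wedge Bf w w', x⁆ = x := by
  unfold InPosPart at h
  have h' := congrArg (⁅wedge Bf w w', ·⁆) h
  simp only [lie_add, lie_sub, lie_smul, lie_zero] at h'
  linear_combination (norm := module)
    (-1 / 2 : K) • h + (-1 / 6 : K) • h' + (1 / 6 : K) • hP.lie_lie_lie hx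

theorem eq_wedge_of_lie_eq_self (hP : IsHyperbolicPair Bf w w') (hx : SkewAdjEnd Bf x)
    (h : ⁅wedge Bf w w', x⁆ = x) : x = wedge Bf (posCoeff Bf w w' x) w' := by
  have h2 := hP.lie_lie_add_lie hx
  rw [h, h] at h2
  linear_combination (norm := module) (1 / 2 : K) • h2

theorem zeroPart_eq (hP : IsHyperbolicPair Bf w w') (hx : SkewAdjEnd Bf x) :
    zeroPart Bf w w' x = x - ⁅wedge Bf w w', ⁅wedge Bf w w', x⁆⁆ := by
  unfold zeroPart
  linear_combination (norm := module)
    (1 / 2 : K) • (hP.lie_lie_add_lie hx + hP.lie_lie_sub_lie hx)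

theorem lie_zeroPart (hP : IsHyperbolicPair Bf w w') (hx : SkewAdjEnd Bf x) :
    ⁅wedge Bf w w', zeroPart Bf w w' x⁆ = 0 := by
  rw [hP.zeroPart_eq hx, lie_sub, hP.lie_lie_lie hx, sub_self]

theorem zeroPart_apply_left (hP : IsHyperbolicPair Bf w w') (hx : SkewAdjEnd Bf x) :
    zeroPart Bf w w' x w = Bf w' (x w) • w := by
  have h1 := mem_pairOrth.mp (hP.posCoeff_mem hx)
  have h2 := mem_pairOrth.mp (hP.swap.posCoeff_mem hx)
  simp only [zeroPart, LinearMap.sub_apply, wedge_apply, hP.symm (posCoeff Bf w w' x) w,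
    hP.symm (posCoeff Bf w' w x) w, h1.1, h2.2, hP.isotropic_left, hP.swap.pairing]
  simp only [posCoeff]
  module

theorem apply_left_of_lie_eq_zero (hP : IsHyperbolicPair Bf w w') (hy : SkewAdjEnd Bf y)
    (h : ⁅wedge Bf w w', y⁆ = 0) : y w = Bf w' (y w) • w := by
  simpa [hP.zeroPart_eq hy, h] using hP.zeroPart_apply_left hy

theorem apply_mem_of_lie_eq_zero (hP : IsHyperbolicPair Bf w w') (hy : SkewAdjEnd Bf y)
    (h : ⁅wedge Bf w w', y⁆ = 0) (hm : m ∈ pairOrth Bf w w') : y m ∈ pairOrth Bf w w' := by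
  have hw' := hP.swap.apply_left_of_lie_eq_zero hy (lie_wedge_swap_eq_zero.mpr h)
  rw [mem_pairOrth] at hm ⊢
  rw [hy.apply_right, hy.apply_right, hP.apply_left_of_lie_eq_zero hy h, hw']
  simp [hm.1, hm.2]

theorem zeroPart_add_smul_apply_left (hP : IsHyperbolicPair Bf w w') (hy : SkewAdjEnd Bf y) :
    (zeroPart Bf w w' y + Bf w' (y w) • wedge Bf w w') w = 0 := by
  simp [hP.zeroPart_apply_left hy, hP.wedge_apply_left]

theorem zeroPart_add_smul_apply_right (hP : IsHyperbolicPair Bf w w') (hy : SkewAdjEnd Bf y) :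
    (zeroPart Bf w w' y + Bf w' (y w) • wedge Bf w w') w' = 0 := by
  rw [LinearMap.add_apply, ← zeroPart_swap, hP.swap.zeroPart_apply_left hy, LinearMap.smul_apply,
    hP.wedge_apply_right, ← add_smul, hy.apply_right, hP.symm (y w), neg_add_cancel, zero_smul]

theorem wedge_posCoeff_mem (hP : IsHyperbolicPair Bf w w') (hg : IsSkewLieSubalgebra Bf g)
    (hD : wedge Bf w w' ∈ g) (hx : x ∈ g) : wedge Bf (posCoeff Bf w w' x) w' ∈ g := by
  have h1 := hg.lie_mem _ hD _ hx
  have h := smul_mem g (1 / 2 : K) (add_mem (hg.lie_mem _ hD _ h1) h1)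
  rwa [hP.lie_lie_add_lie (hg.skewAdjEnd x hx), smul_smul, one_div,
    inv_mul_cancel₀ two_ne_zero, one_smul] at h

theorem posCoeff_mem_wedgeSpace (hP : IsHyperbolicPair Bf w w')
    (hg : IsSkewLieSubalgebra Bf g) (hD : wedge Bf w w' ∈ g) (hx : x ∈ g) :
    posCoeff Bf w w' x ∈ wedgeSpace Bf g w w' :=
  mem_wedgeSpace.mpr ⟨hP.posCoeff_mem (hg.skewAdjEnd x hx), hP.wedge_posCoeff_mem hg hD hx⟩

theorem zeroPart_mem (hP : IsHyperbolicPair Bf w w') (hg : IsSkewLieSubalgebra Bf g)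
    (hD : wedge Bf w w' ∈ g) (hx : x ∈ g) : zeroPart Bf w w' x ∈ g :=
  sub_mem (sub_mem hx (hP.wedge_posCoeff_mem hg hD hx))
    (hP.swap.wedge_posCoeff_mem hg (wedge_swap_mem hD) hx)

theorem apply_mem_wedgeSpace (hP : IsHyperbolicPair Bf w w') (hg : IsSkewLieSubalgebra Bf g)
    (hy : y ∈ g) (h : ⁅wedge Bf w w', y⁆ = 0) (hu : u ∈ wedgeSpace Bf g w w') :
    y u ∈ wedgeSpace Bf g w w' := by
  have hsk := hg.skewAdjEnd y hy
  have hw' := hP.swap.apply_left_of_lie_eq_zero hsk (lie_wedge_swap_eq_zero.mpr h)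
  obtain ⟨hu0, hug⟩ := mem_wedgeSpace.mp hu
  refine mem_wedgeSpace.mpr ⟨hP.apply_mem_of_lie_eq_zero hsk h hu0, ?_⟩
  have hlie := hg.lie_mem _ hy _ hug
  rw [lie_wedge hsk, hw', map_smul] at hlie
  simpa using sub_mem hlie (smul_mem g (Bf w (y w')) hug)

theorem isInvariantUnder_span_sup (hP : IsHyperbolicPair Bf w w')
    (hg : IsSkewLieSubalgebra Bf g) (hD : wedge Bf w w' ∈ g) (hP0 : P ≤ pairOrth Bf w w')
    (hSP : wedgeSpace Bf g w' w ≤ P) (hSP' : ∀ v ∈ wedgeSpace Bf g w' w, ∀ p ∈ P, Bf v p = 0)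
    (hPinv : ∀ y ∈ g, ⁅wedge Bf w w', y⁆ = 0 → ∀ p ∈ P, y p ∈ P) :
    IsInvariantUnder g (K ∙ w' ⊔ P) := by
  intro x hx n hn
  obtain ⟨_, hc, p, hp, rfl⟩ := mem_sup.mp hn
  obtain ⟨c, rfl⟩ := mem_span_singleton.mp hc
  have hsk := hg.skewAdjEnd x hx
  have hp0 := mem_pairOrth.mp (hP0 hp)
  have ha := mem_pairOrth.mp (hP.posCoeff_mem hsk)
  have hb := hP.swap.posCoeff_mem_wedgeSpace hg (wedge_swap_mem hD) hx
  have hb0 := mem_pairOrth.mp (mem_wedgeSpace.mp hb).1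
  have hdec := eq_wedge_add_wedge_add_zeroPart (Bf := Bf) (w := w) (w' := w') x
  have hxw' : x w' = Bf w (x w') • w' - posCoeff Bf w' w x := by
    conv_lhs => rw [hdec]
    rw [← zeroPart_swap, LinearMap.add_apply, LinearMap.add_apply,
      hP.swap.zeroPart_apply_left hsk]
    simp [hP.isotropic_right, hP.symm _ w', ha.2, hb0.1, hP.swap.pairing]
    abel
  have hxp : x p = Bf (posCoeff Bf w w' x) p • w' + zeroPart Bf w w' x p := by
    conv_lhs => rw [hdec]
    simp [hp0.1, hp0.2, hSP' _ hb p hp]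
  rw [map_add, map_smul, hxw', hxp]
  refine add_mem (smul_mem _ _ (sub_mem ?_ ?_)) (add_mem ?_ ?_)
  · exact mem_sup_left (smul_mem _ _ (mem_span_singleton_self w'))
  · exact mem_sup_right (hSP hb)
  · exact mem_sup_left (smul_mem _ _ (mem_span_singleton_self w'))
  · exact mem_sup_right (hPinv _ (hP.zeroPart_mem hg hD hx) (hP.lie_zeroPart hsk) p hp)

theorem exists_isCompl_span_sup (hP : IsHyperbolicPair Bf w w') (hD : wedge Bf w w' ∈ g)
    (hred : IsCompletelyReducible g) (hP0 : P ≤ pairOrth Bf w w')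
    (hN : IsInvariantUnder g (K ∙ w' ⊔ P)) :
    ∃ N', IsCompl (K ∙ w' ⊔ P) N' ∧ wedgeSpace Bf g w w' ≤ N' ∧
      ∀ n ∈ N', Bf w' n = 0 → ∀ u ∈ wedgeSpace Bf g w w', Bf u n = 0 := by
  obtain ⟨N', hc, hN'⟩ := hred _ hN
  have hker : ∀ n ∈ K ∙ w' ⊔ P, Bf w' n = 0 := by
    intro n hn
    obtain ⟨_, hc, p, hp, rfl⟩ := mem_sup.mp hn
    obtain ⟨c, rfl⟩ := mem_span_singleton.mp hc
    simp [hP.isotropic_right, (mem_pairOrth.mp (hP0 hp)).2]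
  have hw : w ∈ N' := by
    refine mem_of_isCompl_of_apply_eq_smul hc (hN _ hD) (hN' _ hD) (c := -1)
      (by rw [hP.wedge_apply_left, neg_one_smul]) fun n hn hDn => ?_
    have hn : n = -(Bf w n • w') := by
      rw [wedge_apply, hker n hn, zero_smul, sub_zero, neg_one_smul] at hDn
      rw [hDn, neg_neg]
    have hwn : Bf w n = 0 := by
      have h := congrArg (Bf w) hn
      simp only [map_neg, map_smul, hP.pairing, smul_eq_mul, mul_one] at h
      linear_combination h / 2
    rw [hn, hwn, zero_smul, neg_zero]
  have hU : wedgeSpace Bf g w w' ≤ N' := fun u hu => by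
    obtain ⟨hu0, hug⟩ := mem_wedgeSpace.mp hu
    simpa [hP.symm u w, (mem_pairOrth.mp hu0).1, hP.swap.pairing] using hN' _ hug w hw
  refine ⟨N', hc, hU, fun n hn hn0 u hu => ?_⟩
  have h1 : Bf u n • w' ∈ N' := by simpa [hn0] using hN' _ (mem_wedgeSpace.mp hu).2 n hn
  have h2 : Bf u n • w' ∈ K ∙ w' ⊔ P := mem_sup_left (smul_mem _ _ (mem_span_singleton_self w'))
  exact (smul_eq_zero.mp (disjoint_def.mp hc.disjoint _ h2 h1)).resolve_right hP.right_ne_zero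

theorem disjoint_wedgeSpace (hP : IsHyperbolicPair Bf w w') (hD : wedge Bf w w' ∈ g)
    (hred : IsCompletelyReducible g) (hP0 : P ≤ pairOrth Bf w w')
    (hN : IsInvariantUnder g (K ∙ w' ⊔ P)) : Disjoint (wedgeSpace Bf g w w') P := by
  obtain ⟨N', hc, hU, -⟩ := hP.exists_isCompl_span_sup hD hred hP0 hN
  exact (hc.disjoint.mono_left le_sup_right).symm.mono_left hU

theorem wedgeSpace_isotropic (hP : IsHyperbolicPair Bf w w') (hD : wedge Bf w w' ∈ g)
    (hred : IsCompletelyReducible g) (hP0 : P ≤ pairOrth Bf w w')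
    (hN : IsInvariantUnder g (K ∙ w' ⊔ P)) :
    ∀ u ∈ wedgeSpace Bf g w w', ∀ u' ∈ wedgeSpace Bf g w w', Bf u u' = 0 := by
  obtain ⟨N', -, hU, horth⟩ := hP.exists_isCompl_span_sup hD hred hP0 hN
  exact fun u hu u' hu' => horth u' (hU hu') (mem_pairOrth.mp (mem_wedgeSpace.mp hu').1).2 u hu

theorem pairOrth_le_sup_orthogonal (hP : IsHyperbolicPair Bf w w') (hD : wedge Bf w w' ∈ g)
    (hred : IsCompletelyReducible g) (hP0 : P ≤ pairOrth Bf w w')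
    (hN : IsInvariantUnder g (K ∙ w' ⊔ P)) :
    pairOrth Bf w w' ≤ P ⊔ LinearMap.BilinForm.orthogonal Bf (wedgeSpace Bf g w w') := by
  obtain ⟨N', hc, -, horth⟩ := hP.exists_isCompl_span_sup hD hred hP0 hN
  intro m hm
  obtain ⟨_, hn, n', hn', rfl⟩ := mem_sup.mp (hc.sup_eq_top ▸ mem_top : m ∈ _ ⊔ N')
  obtain ⟨_, hc', p, hp, rfl⟩ := mem_sup.mp hn
  obtain ⟨c, rfl⟩ := mem_span_singleton.mp hc'
  have hn0 : Bf w' n' = 0 := by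
    have h := (mem_pairOrth.mp hm).2
    simpa [hP.isotropic_right, (mem_pairOrth.mp (hP0 hp)).2] using h
  rw [add_comm (c • w'), add_assoc]
  refine add_mem_sup hp (LinearMap.BilinForm.mem_orthogonal_iff.mpr fun u hu => ?_)
  have hu0 := mem_pairOrth.mp (mem_wedgeSpace.mp hu).1
  simp [hP.symm u w', hu0.2, horth n' hn' hn0 u hu]

theorem mem_of_forall_wedge_mem [FiniteDimensional K M] (hP : IsHyperbolicPair Bf w w')
    (hnd : ∀ u : M, (∀ v, Bf u v = 0) → u = 0)
    (hwedge : ∀ u ∈ pairOrth Bf w w', ∀ v ∈ pairOrth Bf w w', wedge Bf u v ∈ g)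
    (hz : SkewAdjEnd Bf z) (hzw : z w = 0) (hzw' : z w' = 0) : z ∈ g := by
  obtain ⟨n, b, f, hb, hf, hexp, hexp'⟩ := exists_dualFamily (Bf := Bf)
    (fun u hu h => hP.eq_zero_of_mem_pairOrth hnd hu h)
    (fun v hv h => hP.eq_zero_of_mem_pairOrth hnd hv fun u hu => hP.symm v u ▸ h u hu)
  have hE : ∑ i, wedge Bf (f i) (z (b i)) ∈ g :=
    sum_mem fun i _ => hwedge _ (hf i) _ (hz.apply_mem_pairOrth hzw hzw' (b i))
  convert smul_mem g (1 / 2 : K) hE using 1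
  refine hP.ext ?_ ?_ fun m hm => ?_ <;> rw [LinearMap.smul_apply, sum_wedge_apply hz]
  · simp [hzw, hP.symm _ w, fun i => (mem_pairOrth.mp (hf i)).1]
  · simp [hzw', hP.symm _ w', fun i => (mem_pairOrth.mp (hf i)).2]
  · simp_rw [hP.symm (f _) m, hexp m hm, hexp' _ (hz.apply_mem_pairOrth hzw hzw' m)]
    module

theorem disjoint_wedgeSpace_orthogonal (hP : IsHyperbolicPair Bf w w')
    (hg : IsSkewLieSubalgebra Bf g) (hD : wedge Bf w w' ∈ g) (hred : IsCompletelyReducible g)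
    (hiso : ∀ v ∈ wedgeSpace Bf g w' w, ∀ v' ∈ wedgeSpace Bf g w' w, Bf v v' = 0) :
    Disjoint (wedgeSpace Bf g w w')
      (pairOrth Bf w w' ⊓ LinearMap.BilinForm.orthogonal Bf (wedgeSpace Bf g w' w)) := by
  have hS : wedgeSpace Bf g w' w ≤
      pairOrth Bf w w' ⊓ LinearMap.BilinForm.orthogonal Bf (wedgeSpace Bf g w' w) := fun v hv =>
    ⟨pairOrth_comm (Bf := Bf) ▸ (mem_wedgeSpace.mp hv).1,
      LinearMap.BilinForm.mem_orthogonal_iff.mpr fun v' hv' => hiso v' hv' v hv⟩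
  refine hP.disjoint_wedgeSpace hD hred inf_le_left (hP.isInvariantUnder_span_sup hg hD
    inf_le_left hS (fun v hv p hp => LinearMap.BilinForm.mem_orthogonal_iff.mp hp.2 v hv)
    fun y hy h p hp => ⟨hP.apply_mem_of_lie_eq_zero (hg.skewAdjEnd y hy) h hp.1,
      LinearMap.BilinForm.mem_orthogonal_iff.mpr fun v hv => ?_⟩)
  rw [(hg.skewAdjEnd y hy).apply_right, LinearMap.BilinForm.mem_orthogonal_iff.mp hp.2 _
    (hP.swap.apply_mem_wedgeSpace hg hy (lie_wedge_swap_eq_zero.mpr h) hv), neg_zero]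

theorem wedgeSpace_swap_eq_pairOrth (hP : IsHyperbolicPair Bf w w')
    (hg : IsSkewLieSubalgebra Bf g) (hD : wedge Bf w w' ∈ g) (hred : IsCompletelyReducible g)
    (hU : wedgeSpace Bf g w w' = pairOrth Bf w w') (hne : pairOrth Bf w w' ≠ ⊥) :
    wedgeSpace Bf g w' w = pairOrth Bf w w' := by
  have hS0 : wedgeSpace Bf g w' w ≤ pairOrth Bf w w' := fun v hv =>
    pairOrth_comm (Bf := Bf) ▸ (mem_wedgeSpace.mp hv).1
  by_cases hiso : ∀ v ∈ wedgeSpace Bf g w' w, ∀ v' ∈ wedgeSpace Bf g w' w, Bf v v' = 0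
  · have hP0 := (hU ▸ hP.disjoint_wedgeSpace_orthogonal hg hD hred hiso).eq_bot_of_ge inf_le_left
    have hS : wedgeSpace Bf g w' w = ⊥ := eq_bot_iff.mpr fun v hv => hP0 ▸
      ⟨hS0 hv, LinearMap.BilinForm.mem_orthogonal_iff.mpr fun v' hv' => hiso v' hv' v hv⟩
    simp only [hS, LinearMap.BilinForm.orthogonal_bot, inf_top_eq] at hP0
    exact absurd hP0 hne
  push Not at hiso
  obtain ⟨v, hv, v', hv', hvv'⟩ := hiso
  refine le_antisymm hS0 fun u hu => mem_wedgeSpace.mpr ⟨pairOrth_comm (Bf := Bf) ▸ hu, ?_⟩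
  have hlie := hg.lie_mem _ (hP.wedge_mem hg hD (hU ▸ hu) hv') _ (mem_wedgeSpace.mp hv).2
  have hu0 := mem_pairOrth.mp hu
  have hv'0 := mem_pairOrth.mp (hS0 hv')
  rw [lie_wedge (skewAdjEnd_wedge hP.symm u v')] at hlie
  simp only [wedge_apply, hP.symm u w, hP.symm v' w, hu0.1, hv'0.1, zero_smul, sub_zero,
    map_zero, add_zero, map_sub, map_smul, LinearMap.sub_apply, LinearMap.smul_apply] at hlie
  have h := smul_mem g (Bf v' v)⁻¹ (sub_mem (smul_mem g (Bf u v) (mem_wedgeSpace.mp hv').2) hlie)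
  rwa [sub_sub_cancel, smul_smul, inv_mul_cancel₀ (hP.symm v v' ▸ hvv'), one_smul] at h

theorem coe_eq_setOf_skewAdjEnd [FiniteDimensional K M] (hP : IsHyperbolicPair Bf w w')
    (hnd : ∀ u : M, (∀ v, Bf u v = 0) → u = 0) (hg : IsSkewLieSubalgebra Bf g)
    (hD : wedge Bf w w' ∈ g) (hred : IsCompletelyReducible g)
    (hU : wedgeSpace Bf g w w' = pairOrth Bf w w') (hne : pairOrth Bf w w' ≠ ⊥) :
    (g : Set (Module.End K M)) = {y | SkewAdjEnd Bf y} := by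
  have hS := hP.wedgeSpace_swap_eq_pairOrth hg hD hred hU hne
  have hwedge : ∀ u ∈ pairOrth Bf w w', ∀ v ∈ pairOrth Bf w w', wedge Bf u v ∈ g :=
    fun u hu v hv => hP.wedge_mem hg hD (hU ▸ hu) (hS ▸ hv)
  refine Set.ext fun y => ⟨hg.skewAdjEnd y, fun hy => ?_⟩
  have hz := hP.mem_of_forall_wedge_mem hnd hwedge
    ((hP.skewAdjEnd_zeroPart hy).add ((skewAdjEnd_wedge hP.symm w w').smul (Bf w' (y w))))
    (hP.zeroPart_add_smul_apply_left hy) (hP.zeroPart_add_smul_apply_right hy)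
  have ha := (mem_wedgeSpace.mp (hU ▸ hP.posCoeff_mem hy)).2
  have hb := (mem_wedgeSpace.mp (hS ▸ pairOrth_comm (Bf := Bf) ▸ hP.swap.posCoeff_mem hy)).2
  rw [SetLike.mem_coe, eq_wedge_add_wedge_add_zeroPart (Bf := Bf) (w := w) (w' := w') y,
    ← add_sub_cancel_right (zeroPart Bf w w' y) (Bf w' (y w) • wedge Bf w w')]
  exact add_mem (add_mem ha hb) (sub_mem hz (smul_mem g _ hD))

theorem wedgeSpace_inf_eq_bot (hP : IsHyperbolicPair Bf w w') (hg : IsSkewLieSubalgebra Bf g)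
    (hD : wedge Bf w w' ∈ g) (hred : IsCompletelyReducible g)
    (hAB : ∀ a ∈ A, ∀ b ∈ B, Bf a b = 0) (hdisj : Disjoint A B)
    (hB : ∀ b ∈ B, (∀ b' ∈ B, Bf b b' = 0) → b = 0)
    (hLevi : ∀ y ∈ g, ⁅wedge Bf w w', y⁆ = 0 → ∀ b ∈ B, y b ∈ B)
    (hA : A ⊓ wedgeSpace Bf g w w' ≠ ⊥) : wedgeSpace Bf g w w' ⊓ B = ⊥ := by
  by_contra hne
  obtain ⟨a, ⟨haA, haU⟩, ha0⟩ := exists_mem_ne_zero_of_ne_bot hA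
  obtain ⟨u, ⟨huU, huB⟩, hu0⟩ := exists_mem_ne_zero_of_ne_bot hne
  obtain ⟨y, hyB, huy⟩ : ∃ y ∈ B, Bf u y ≠ 0 := by
    by_contra! h
    exact hu0 (hB u huB h)
  have hS : wedgeSpace Bf g w' w = ⊥ := eq_bot_iff.mpr fun v hv => by
    have hv0 := pairOrth_comm (Bf := Bf) ▸ (mem_wedgeSpace.mp hv).1
    have hmaps : ∀ u ∈ wedgeSpace Bf g w w', ∀ b ∈ B, wedge Bf u v b ∈ B := fun u hu =>
      hLevi _ (hP.wedge_mem hg hD hu hv) (hP.lie_wedge_eq_zero (mem_wedgeSpace.mp hu).1 hv0)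
    have hvB : ∀ b ∈ B, Bf v b = 0 := fun b hb => by
      have h := hmaps a haU b hb
      rw [wedge_apply, hAB a haA b hb, zero_smul, zero_sub] at h
      have h0 := disjoint_def.mp hdisj _ (neg_mem (smul_mem _ _ haA)) h
      simpa [ha0] using h0
    have hvB' : v ∈ B := by
      have h := hmaps u huU y hyB
      rw [wedge_apply, hvB y hyB, zero_smul, sub_zero] at h
      simpa [huy] using smul_mem B (Bf u y)⁻¹ h
    exact (mem_bot K).mpr (hB v hvB' hvB)
  have hU0 : wedgeSpace Bf g w w' ≤ pairOrth Bf w w' := fun u hu => (mem_wedgeSpace.mp hu).1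
  have hinv := hP.isInvariantUnder_span_sup hg hD hU0 (hS ▸ bot_le)
    (fun v hv => by simp [(mem_bot K).mp (hS ▸ hv)])
    fun y hy h p hp => hP.apply_mem_wedgeSpace hg hy h hp
  exact hu0 ((mem_bot K).mp (disjoint_self.mp (hP.disjoint_wedgeSpace hD hred hU0 hinv) ▸ huU))

theorem apply_mem_of_apply_mem_inf (hP : IsHyperbolicPair Bf w w')
    (hL : IsLagrangianSplitting Bf W W') (hw : w ∈ W) (hy : SkewAdjEnd Bf y)
    (h : ⁅wedge Bf w w', y⁆ = 0) (h0 : ∀ m ∈ W ⊓ pairOrth Bf w w', y m ∈ W) :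
    ∀ m ∈ W, y m ∈ W := fun m hm => by
  rw [← sub_add_cancel m (Bf w' m • w), map_add, map_smul, hP.apply_left_of_lie_eq_zero hy h]
  exact add_mem (h0 _ (hL.sub_mem_inf hP hw hm)) (smul_mem _ _ (smul_mem _ _ hw))

theorem wedgeSpace_swap_le_inf (hP : IsHyperbolicPair Bf w w') (hg : IsSkewLieSubalgebra Bf g)
    (hD : wedge Bf w w' ∈ g) (hnd : ∀ u : M, (∀ v, Bf u v = 0) → u = 0)
    (hL : IsLagrangianSplitting Bf W W') (hw : w ∈ W) (hw' : w' ∈ W')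
    (hU : wedgeSpace Bf g w w' = W ⊓ pairOrth Bf w w')
    (hLevi : ∀ y ∈ g, ⁅wedge Bf w w', y⁆ = 0 →
      ∀ m ∈ W' ⊓ pairOrth Bf w w', y m ∈ W' ⊓ pairOrth Bf w w')
    (hdisj : Disjoint (wedgeSpace Bf g w' w) (wedgeSpace Bf g w w'))
    (hiso : ∀ v ∈ wedgeSpace Bf g w' w, ∀ v' ∈ wedgeSpace Bf g w' w, Bf v v' = 0) :
    wedgeSpace Bf g w' w ≤ W' ⊓ pairOrth Bf w w' := by
  intro v hv
  have hv0 : v ∈ pairOrth Bf w w' := pairOrth_comm (Bf := Bf) ▸ (mem_wedgeSpace.mp hv).1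
  obtain ⟨x, hx, x', hx', rfl⟩ := mem_sup.mp (hL.pairOrth_le hw hw' hv0)
  have hxx' : Bf x x' = 0 := by
    have h := hiso _ hv _ hv
    simp only [map_add, LinearMap.add_apply, hL.isotropic_left x hx.1 x hx.1,
      hL.isotropic_right x' hx'.1 x' hx'.1, hP.symm x' x] at h
    linear_combination h / 2
  -- condition (1) for `wedge u (x + x') ∈ g₀`, evaluated at `x' ∈ W'`
  have hperp : ∀ u ∈ W ⊓ pairOrth Bf w w', Bf u x' • x = 0 := fun u hu => by
    have hy := hLevi _ (hP.wedge_mem hg hD (hU ▸ hu) hv) (hP.lie_wedge_eq_zero hu.2 hv0) x' hx'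
    have hyx' : wedge Bf u (x + x') x' - Bf u x' • x' = Bf u x' • x := by
      simp [hxx', hL.isotropic_right x' hx'.1 x' hx'.1]
    refine disjoint_def.mp (hL.disjoint hnd) _ (smul_mem _ _ hx.1) ?_
    rw [← hyx']
    exact sub_mem hy.1 (smul_mem _ _ hx'.1)
  by_cases hx0 : x = 0
  · simpa [hx0] using hx'
  have hx'0 : x' = 0 := hL.swap.eq_zero_of_forall_mem_inf hP.swap hnd hw (pairOrth_comm (Bf := Bf) ▸ hx')
    fun u hu => by
      rw [hP.symm]
      exact (smul_eq_zero.mp (hperp u (pairOrth_comm (Bf := Bf) ▸ hu))).resolve_right hx0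
  rw [hx'0, add_zero] at hv
  exact absurd (disjoint_def.mp hdisj x hv (hU ▸ hx)) hx0

theorem wedgeSpace_swap_eq_inf (hP : IsHyperbolicPair Bf w w') (hg : IsSkewLieSubalgebra Bf g)
    (hD : wedge Bf w w' ∈ g) (hred : IsCompletelyReducible g)
    (hnd : ∀ u : M, (∀ v, Bf u v = 0) → u = 0) (hL : IsLagrangianSplitting Bf W W')
    (hw : w ∈ W) (hw' : w' ∈ W') (hU : wedgeSpace Bf g w w' = W ⊓ pairOrth Bf w w')
    (hLevi : ∀ y ∈ g, ⁅wedge Bf w w', y⁆ = 0 →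
      ∀ m ∈ W' ⊓ pairOrth Bf w w', y m ∈ W' ⊓ pairOrth Bf w w') :
    wedgeSpace Bf g w' w = W' ⊓ pairOrth Bf w w' := by
  have hD' := wedge_swap_mem hD
  have hU0 : wedgeSpace Bf g w w' ≤ pairOrth Bf w' w := fun u hu =>
    pairOrth_comm (Bf := Bf) ▸ (mem_wedgeSpace.mp hu).1
  have hS0 : wedgeSpace Bf g w' w ≤ pairOrth Bf w w' := fun v hv =>
    pairOrth_comm (Bf := Bf) ▸ (mem_wedgeSpace.mp hv).1
  have hUinv : IsInvariantUnder g (K ∙ w ⊔ wedgeSpace Bf g w w') :=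
    hP.swap.isInvariantUnder_span_sup hg hD' hU0 le_rfl
      (fun u hu p hp => hL.isotropic_left u (hU ▸ hu).1 p (hU ▸ hp).1)
      fun y hy h p hp => hP.apply_mem_wedgeSpace hg hy (lie_wedge_swap_eq_zero.mp h) hp
  have hiso := hP.swap.wedgeSpace_isotropic hD' hred hU0 hUinv
  have hSW' := hP.wedgeSpace_swap_le_inf hg hD hnd hL hw hw' hU hLevi
    (hP.swap.disjoint_wedgeSpace hD' hred hU0 hUinv) hiso
  have hSinv : IsInvariantUnder g (K ∙ w' ⊔ wedgeSpace Bf g w' w) :=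
    hP.isInvariantUnder_span_sup hg hD hS0 le_rfl hiso
      fun y hy h p hp => hP.swap.apply_mem_wedgeSpace hg hy (lie_wedge_swap_eq_zero.mpr h) hp
  refine le_antisymm hSW' fun f hf => ?_
  obtain ⟨p, hp, q, hq, rfl⟩ := mem_sup.mp (hP.pairOrth_le_sup_orthogonal hD hred hS0 hSinv hf.2)
  have hq' : q ∈ W' ⊓ pairOrth Bf w w' := by simpa using sub_mem hf (hSW' hp)
  have hq0 : q = 0 := hL.swap.eq_zero_of_forall_mem_inf hP.swap hnd hw (pairOrth_comm (Bf := Bf) ▸ hq')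
    fun u hu => by
      rw [hP.symm]
      exact LinearMap.BilinForm.mem_orthogonal_iff.mp hq u (hU ▸ pairOrth_comm (Bf := Bf) ▸ hu)
  simpa [hq0] using hp

theorem mapsTo_of_mem (hP : IsHyperbolicPair Bf w w') (hg : IsSkewLieSubalgebra Bf g)
    (hD : wedge Bf w w' ∈ g) (hL : IsLagrangianSplitting Bf W W') (hw : w ∈ W) (hw' : w' ∈ W')
    (hU : wedgeSpace Bf g w w' = W ⊓ pairOrth Bf w w')
    (hS : wedgeSpace Bf g w' w = W' ⊓ pairOrth Bf w w')
    (hLevi : ∀ y ∈ g, ⁅wedge Bf w w', y⁆ = 0 →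
      ∀ m ∈ W' ⊓ pairOrth Bf w w', y m ∈ W' ⊓ pairOrth Bf w w') (hy : y ∈ g) :
    (∀ v ∈ W, y v ∈ W) ∧ ∀ v ∈ W', y v ∈ W' := by
  have hsk := hg.skewAdjEnd y hy
  have ha := hU ▸ hP.posCoeff_mem_wedgeSpace hg hD hy
  have hb := hS ▸ hP.swap.posCoeff_mem_wedgeSpace hg (wedge_swap_mem hD) hy
  have hz := hP.zeroPart_mem hg hD hy
  have hz0 := hP.lie_zeroPart hsk
  have hzW := hP.apply_mem_of_apply_mem_inf hL hw (hP.skewAdjEnd_zeroPart hsk) hz0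
    fun m hm => (hU ▸ hP.apply_mem_wedgeSpace hg hz hz0 (hU ▸ hm)).1
  have hzW' : ∀ v ∈ W', zeroPart Bf w w' y v ∈ W' := by
    rw [← zeroPart_swap]
    refine hP.swap.apply_mem_of_apply_mem_inf hL.swap hw' (hP.swap.skewAdjEnd_zeroPart hsk)
      (by rw [zeroPart_swap]; exact lie_wedge_swap_eq_zero.mpr hz0) fun m hm => ?_
    rw [zeroPart_swap]
    exact (hLevi _ hz hz0 m (pairOrth_comm (Bf := Bf) ▸ hm)).1
  refine ⟨fun v hv => ?_, fun v hv => ?_⟩ <;>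
    rw [eq_wedge_add_wedge_add_zeroPart (Bf := Bf) (w := w) (w' := w') y]
  · exact add_mem (add_mem (hL.wedge_apply_mem_left ha.1 hv)
      (hL.swap.wedge_apply_mem_right hw hv)) (hzW v hv)
  · exact add_mem (add_mem (hL.wedge_apply_mem_right hw' hv)
      (hL.swap.wedge_apply_mem_left hb.1 hv)) (hzW' v hv)

theorem mem_of_mapsTo [FiniteDimensional K M] (hP : IsHyperbolicPair Bf w w')
    (hnd : ∀ u : M, (∀ v, Bf u v = 0) → u = 0) (hg : IsSkewLieSubalgebra Bf g)
    (hD : wedge Bf w w' ∈ g) (hL : IsLagrangianSplitting Bf W W') (hw : w ∈ W) (hw' : w' ∈ W')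
    (hU : wedgeSpace Bf g w w' = W ⊓ pairOrth Bf w w')
    (hS : wedgeSpace Bf g w' w = W' ⊓ pairOrth Bf w w') (hy : SkewAdjEnd Bf y)
    (hyW : ∀ v ∈ W, y v ∈ W) (hyW' : ∀ v ∈ W', y v ∈ W') : y ∈ g := by
  have ha : posCoeff Bf w w' y ∈ W ⊓ pairOrth Bf w w' :=
    ⟨sub_mem (smul_mem _ _ hw) (hyW w hw), hP.posCoeff_mem hy⟩
  have hb : posCoeff Bf w' w y ∈ W' ⊓ pairOrth Bf w w' :=
    ⟨sub_mem (smul_mem _ _ hw') (hyW' w' hw'), pairOrth_comm (Bf := Bf) ▸ hP.swap.posCoeff_mem hy⟩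
  have hz : zeroPart Bf w w' y + Bf w' (y w) • wedge Bf w w' ∈ g := by
    refine hL.mem_of_forall_wedge_mem hP hnd hw hw' (fun v hv u hu => ?_)
      ((hP.skewAdjEnd_zeroPart hy).add ((skewAdjEnd_wedge hP.symm w w').smul _))
      (hP.zeroPart_add_smul_apply_left hy) (hP.zeroPart_add_smul_apply_right hy)
      (fun v hv => ?_) (fun v hv => ?_)
    · rw [wedge_comm]
      exact neg_mem (hP.wedge_mem hg hD (hU ▸ hu) (hS ▸ hv))
    · simp only [zeroPart, LinearMap.add_apply, LinearMap.sub_apply, LinearMap.smul_apply]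
      exact add_mem (sub_mem (sub_mem (hyW v hv) (hL.wedge_apply_mem_left ha.1 hv))
        (hL.swap.wedge_apply_mem_right hw hv)) (smul_mem _ _ (hL.wedge_apply_mem_left hw hv))
    · simp only [zeroPart, LinearMap.add_apply, LinearMap.sub_apply, LinearMap.smul_apply]
      exact add_mem (sub_mem (sub_mem (hyW' v hv) (hL.wedge_apply_mem_right hw' hv))
        (hL.swap.wedge_apply_mem_left hb.1 hv)) (smul_mem _ _ (hL.wedge_apply_mem_right hw' hv))
  rw [eq_wedge_add_wedge_add_zeroPart (Bf := Bf) (w := w) (w' := w') y,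
    ← add_sub_cancel_right (zeroPart Bf w w' y) (Bf w' (y w) • wedge Bf w w')]
  exact add_mem (add_mem (mem_wedgeSpace.mp (hU ▸ ha)).2 (mem_wedgeSpace.mp (hS ▸ hb)).2)
    (sub_mem hz (smul_mem g _ hD))

theorem coe_eq_setOf_mapsTo [FiniteDimensional K M] (hP : IsHyperbolicPair Bf w w')
    (hnd : ∀ u : M, (∀ v, Bf u v = 0) → u = 0) (hg : IsSkewLieSubalgebra Bf g)
    (hD : wedge Bf w w' ∈ g) (hred : IsCompletelyReducible g) (hL : IsLagrangianSplitting Bf W W')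
    (hw : w ∈ W) (hw' : w' ∈ W') (hU : wedgeSpace Bf g w w' = W ⊓ pairOrth Bf w w')
    (hLevi : ∀ y ∈ g, ⁅wedge Bf w w', y⁆ = 0 →
      ∀ m ∈ W' ⊓ pairOrth Bf w w', y m ∈ W' ⊓ pairOrth Bf w w') :
    (g : Set (Module.End K M)) =
      {y | SkewAdjEnd Bf y ∧ (∀ v ∈ W, y v ∈ W) ∧ ∀ v ∈ W', y v ∈ W'} := by
  have hS := hP.wedgeSpace_swap_eq_inf hg hD hred hnd hL hw hw' hU hLevi
  exact Set.ext fun y => ⟨fun hy => ⟨hg.skewAdjEnd y hy, hP.mapsTo_of_mem hg hD hL hw hw' hU hS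
    hLevi hy⟩, fun ⟨hy, hyW, hyW'⟩ => hP.mem_of_mapsTo hnd hg hD hL hw hw' hU hS hy hyW hyW'⟩

theorem wedgeSpace_le_sup (hP : IsHyperbolicPair Bf w w') (hM0 : Ma ⊔ Mb = pairOrth Bf w w')
    (hw : w ∈ Wb) (hWb : Wb = Wb ⊓ Mb ⊔ span K {w})
    (hU : {x | x ∈ g ∧ InPosPart (wedge Bf w w') x} ⊆ unipotentSum Bf w w' Ma Mb Wb Wb') :
    wedgeSpace Bf g w w' ≤ Ma ⊔ Wb ⊓ Mb := by
  intro u hu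
  obtain ⟨hu0, hug⟩ := mem_wedgeSpace.mp hu
  obtain ⟨xa, ⟨hask, hapos, -, haim⟩, xb, ⟨hbsk, hbpos, hbW, -, -⟩, hsum⟩ :=
    hU ⟨hug, inPosPart_of_lie_eq_self (hP.lie_wedge_eq_self hu0)⟩
  have hxa := hP.eq_wedge_of_lie_eq_self hask (hP.lie_eq_self_of_inPosPart hask hapos)
  have hxb := hP.eq_wedge_of_lie_eq_self hbsk (hP.lie_eq_self_of_inPosPart hbsk hbpos)
  have ha0 := hP.posCoeff_mem hask
  have hb0 := hP.posCoeff_mem hbsk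
  have ha : posCoeff Bf w w' xa ∈ Ma := by
    have hmem : posCoeff Bf w w' xa ∈ Ma ⊔ span K {w, w'} :=
      sub_mem (smul_mem _ _ (mem_sup_right (subset_span (by simp)))) (haim w)
    obtain ⟨a, ha, s, hs, hsum⟩ := mem_sup.mp hmem
    have hs0 : s = 0 := disjoint_def.mp hP.disjoint_span_pairOrth s hs <| by
      simpa only [← hsum, add_sub_cancel_left] using sub_mem ha0 ((le_sup_left.trans hM0.le) ha)
    rwa [← hsum, hs0, add_zero]
  have hb : posCoeff Bf w w' xb ∈ Wb ⊓ Mb := by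
    have hmem : posCoeff Bf w w' xb ∈ Wb ⊓ Mb ⊔ span K {w} :=
      hWb ▸ sub_mem (smul_mem _ _ hw) (hbW w hw)
    obtain ⟨b, hb, s, hs, hsum⟩ := mem_sup.mp hmem
    have hs0 : s = 0 := disjoint_def.mp hP.disjoint_span_pairOrth s (span_mono (by simp) hs) <| by
      simpa only [← hsum, add_sub_cancel_left] using sub_mem hb0 ((le_sup_right.trans hM0.le) hb.2)
    rwa [← hsum, hs0, add_zero]
  have hu' : u = posCoeff Bf w w' xa + posCoeff Bf w w' xb := by
    have h := congrArg (· w) hsum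
    rw [hxa, hxb] at h
    simp only [LinearMap.add_apply, hP.wedge_apply_left_of_mem hu0,
      hP.wedge_apply_left_of_mem ha0, hP.wedge_apply_left_of_mem hb0] at h
    linear_combination (norm := module) -h
  exact hu' ▸ add_mem_sup ha hb

end IsHyperbolicPair

end CharZero

namespace IsHyperbolicPair

theorem sup_le_wedgeSpace (hP : IsHyperbolicPair Bf w w') (hM0 : Ma ⊔ Mb = pairOrth Bf w w')
    (hab : ∀ va ∈ Ma, ∀ vb ∈ Mb, Bf va vb = 0) (hw' : w' ∈ Wb')
    (hWbiso : ∀ x ∈ Wb, ∀ y ∈ Wb, Bf x y = 0) (hWb'iso : ∀ x ∈ Wb', ∀ y ∈ Wb', Bf x y = 0)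
    (hU : unipotentSum Bf w w' Ma Mb Wb Wb' ⊆ {x | x ∈ g ∧ InPosPart (wedge Bf w w') x}) :
    Ma ⊔ Wb ⊓ Mb ≤ wedgeSpace Bf g w w' := by
  have hMa0 : Ma ≤ pairOrth Bf w w' := hM0 ▸ le_sup_left
  have hMb0 : Mb ≤ pairOrth Bf w w' := hM0 ▸ le_sup_right
  have hpos : ∀ u ∈ pairOrth Bf w w', InPosPart (wedge Bf w w') (wedge Bf u w') := fun u hu =>
    inPosPart_of_lie_eq_self (hP.lie_wedge_eq_self hu)
  have hskew0 : SkewAdjEnd Bf (0 : Module.End K M) := fun _ _ => by simp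
  have hpos0 : InPosPart (wedge Bf w w') 0 := inPosPart_of_lie_eq_self (lie_zero _)
  refine sup_le (fun u hu => ?_) fun u hu => ?_
  · have hx : wedge Bf u w' ∈ unipotentSum Bf w w' Ma Mb Wb Wb' :=
      ⟨_, ⟨skewAdjEnd_wedge hP.symm u w', hpos u (hMa0 hu),
        fun v hv => by simp [hab u hu v hv, (mem_pairOrth.mp (hMb0 hv)).2],
        fun v => sub_mem (smul_mem _ _ (mem_sup_right (subset_span (by simp))))
          (smul_mem _ _ (mem_sup_left hu))⟩,
      0, ⟨hskew0, hpos0, fun _ _ => zero_mem _, fun _ _ => zero_mem _, fun _ _ => rfl⟩,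
      (add_zero _).symm⟩
    exact mem_wedgeSpace.mpr ⟨hMa0 hu, (hU hx).1⟩
  · have hx : wedge Bf u w' ∈ unipotentSum Bf w w' Ma Mb Wb Wb' :=
      ⟨0, ⟨hskew0, hpos0, fun _ _ => rfl, fun _ => zero_mem _⟩,
      _, ⟨skewAdjEnd_wedge hP.symm u w', hpos u (hMb0 hu.2),
        fun v hv => wedge_apply_mem_left hWbiso hu.1 hv w',
        fun v hv => wedge_apply_mem_right hWb'iso hw' hv u,
        fun v hv => by simp [hP.symm u v, hab v hv u hu.2, (mem_pairOrth.mp (hMa0 hv)).2]⟩,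
      (zero_add _).symm⟩
    exact mem_wedgeSpace.mpr ⟨hMb0 hu.2, (hU hx).1⟩

theorem le_inf_sup_inf (hP : IsHyperbolicPair Bf w w') (hMb : Mb ≤ pairOrth Bf w w')
    (hsum : Wb ⊔ Wb' = span K {w, w'} ⊔ Mb) (hWb : Wb = Wb ⊓ Mb ⊔ span K {w})
    (hWb' : Wb' = Wb' ⊓ Mb ⊔ span K {w'}) : Mb ≤ Wb ⊓ Mb ⊔ Wb' ⊓ Mb := by
  intro m hm
  obtain ⟨x, hx, x', hx', rfl⟩ := mem_sup.mp (hsum ▸ mem_sup_right hm : m ∈ Wb ⊔ Wb')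
  obtain ⟨x₀, hx₀, s, hs, rfl⟩ := mem_sup.mp (hWb ▸ hx)
  obtain ⟨x₀', hx₀', s', hs', rfl⟩ := mem_sup.mp (hWb' ▸ hx')
  have hss : s + s' = 0 := by
    refine disjoint_def.mp hP.disjoint_span_pairOrth _
      (add_mem (span_mono (by simp) hs) (span_mono (by simp) hs')) ?_
    have h := sub_mem (sub_mem (hMb hm) (hMb hx₀.2)) (hMb hx₀'.2)
    convert h using 1
    abel
  convert add_mem_sup hx₀ hx₀' using 1
  linear_combination (norm := abel) hss

theorem eq_zero_of_mem_summand (hP : IsHyperbolicPair Bf w w')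
    (hnd : ∀ u : M, (∀ v, Bf u v = 0) → u = 0) (hM0 : Ma ⊔ Mb = pairOrth Bf w w')
    (hab : ∀ va ∈ Ma, ∀ vb ∈ Mb, Bf va vb = 0) : ∀ b ∈ Mb, (∀ b' ∈ Mb, Bf b b' = 0) → b = 0 :=
  fun b hb h => hP.eq_zero_of_mem_pairOrth hnd (hM0 ▸ mem_sup_right hb) fun v hv => by
    obtain ⟨va, hva, vb, hvb, rfl⟩ := mem_sup.mp (hM0 ▸ hv)
    rw [map_add, hP.symm b va, hab va hva b hb, h vb hvb, add_zero]

end IsHyperbolicPair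

theorem mapsTo_smul_wedge_add_add (hMb : Mb ≤ pairOrth Bf w w')
    (hsplit : Mb ≤ Wb ⊓ Mb ⊔ Wb' ⊓ Mb) (c : K) {xa xb : Module.End K M}
    (hxa : ∀ v ∈ Mb, xa v = 0) (hxbW : ∀ v ∈ Wb ⊓ Mb, xb v ∈ Wb ⊓ Mb)
    (hxbW' : ∀ v ∈ Wb' ⊓ Mb, xb v ∈ Wb' ⊓ Mb) :
    (∀ m ∈ Mb, (c • wedge Bf w w' + xa + xb) m ∈ Mb) ∧
      ∀ m ∈ Wb' ⊓ Mb, (c • wedge Bf w w' + xa + xb) m ∈ Wb' ⊓ Mb := by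
  have h : ∀ m ∈ Mb, (c • wedge Bf w w' + xa + xb) m = xb m := fun m hm => by
    simp [wedge_apply_of_mem_pairOrth (hMb hm), hxa m hm]
  refine ⟨fun m hm => ?_, fun m hm => h m hm.2 ▸ hxbW' m hm⟩
  obtain ⟨x, hx, x', hx', rfl⟩ := mem_sup.mp (hsplit hm)
  rw [h _ hm, map_add]
  exact add_mem (hxbW x hx).2 (hxbW' x' hx').2

theorem eq_bot_of_inf_eq_bot (hsplit : Mb ≤ Wb ⊓ Mb ⊔ Wb' ⊓ Mb)
    (hWb' : ∀ x ∈ Wb', ∀ y ∈ Wb', Bf x y = 0) (hMb : ∀ b ∈ Mb, (∀ b' ∈ Mb, Bf b b' = 0) → b = 0)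
    (h : Wb ⊓ Mb = ⊥) : Mb = ⊥ := by
  have hle : Mb ≤ Wb' := fun m hm => (by simpa [h] using hsplit hm : m ∈ Wb' ∧ m ∈ Mb).1
  exact eq_bot_iff.mpr fun m hm =>
    (mem_bot K).mpr (hMb m hm fun b hb => hWb' m (hle hm) b (hle hb))

end

theorem stmt_16_general {K M : Type*} [Field K] [CharZero K]
    [AddCommGroup M] [Module K M] [FiniteDimensional K M]
    (Bf : M →ₗ[K] M →ₗ[K] K) (hsymm : ∀ u v, Bf u v = Bf v u)
    (hnd : ∀ u : M, (∀ v, Bf u v = 0) → u = 0)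
    (Ma0 Mb0 : Submodule K M) (w w' : M)
    (hww : Bf w w = 0) (hw'w' : Bf w' w' = 0) (hww' : Bf w w' = 1)
    (horta : ∀ v ∈ Ma0, Bf w v = 0 ∧ Bf w' v = 0)
    (hortb : ∀ v ∈ Mb0, Bf w v = 0 ∧ Bf w' v = 0)
    (hortab : ∀ va ∈ Ma0, ∀ vb ∈ Mb0, Bf va vb = 0)
    (hdisj : Disjoint Ma0 Mb0)
    (hcompl : IsCompl (Submodule.span K {w, w'}) (Ma0 ⊔ Mb0))
    -- the Hermitian structure on `M_b`: mutually dual maximal isotropic subspaces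
    (Wb Wb' : Submodule K M)
    (hwWb : w ∈ Wb) (hw'Wb' : w' ∈ Wb')
    (hWbiso : ∀ x ∈ Wb, ∀ y ∈ Wb, Bf x y = 0)
    (hWb'iso : ∀ x ∈ Wb', ∀ y ∈ Wb', Bf x y = 0)
    (hWbsum : Wb ⊔ Wb' = Submodule.span K {w, w'} ⊔ Mb0)
    (hWb0 : Wb = (Wb ⊓ Mb0) ⊔ Submodule.span K {w})
    (hWb'0 : Wb' = (Wb' ⊓ Mb0) ⊔ Submodule.span K {w'})
    -- the derivative `D` of the cocharacter `ν`
    (D : Module.End K M) (hDw : D w = -w) (hDw' : D w' = w')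
    (hDa : ∀ v ∈ Ma0, D v = 0) (hDb : ∀ v ∈ Mb0, D v = 0)
    -- `g` is a reductive Lie subalgebra of `so(M)` containing `im ν`
    (g : Submodule K (Module.End K M))
    (hgbracket : ∀ x ∈ g, ∀ y ∈ g, ⁅x, y⁆ ∈ g)
    (hgso : ∀ x ∈ g, SkewAdjEnd Bf x)
    (hDg : D ∈ g)
    (hred : ∀ N : Submodule K M, (∀ x ∈ g, ∀ v ∈ N, x v ∈ N) →
      ∃ N' : Submodule K M, IsCompl N N' ∧ ∀ x ∈ g, ∀ v ∈ N', x v ∈ N')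
    -- (1) the Levi of `g` relative to `ν` lies in `K·D ⊕ so(M_{a,0}) ⊕ su(φ_{b,0})`
    (hLevi : ∀ x ∈ g, ⁅D, x⁆ = 0 →
      ∃ c : K, ∃ xa ∈ {y : Module.End K M | SkewAdjEnd Bf y ∧ (∀ v ∈ Mb0, y v = 0) ∧
          y w = 0 ∧ y w' = 0 ∧ ∀ v ∈ Ma0, y v ∈ Ma0},
        ∃ xb ∈ {y : Module.End K M | SkewAdjEnd Bf y ∧ (∀ v ∈ Ma0, y v = 0) ∧
          y w = 0 ∧ y w' = 0 ∧ (∀ v ∈ Wb ⊓ Mb0, y v ∈ Wb ⊓ Mb0) ∧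
          ∀ v ∈ Wb' ⊓ Mb0, y v ∈ Wb' ⊓ Mb0},
        x = c • D + xa + xb)
    -- (2) the unipotent part of `g` is `Lie U_{SO(M_a),ν} ⊕ Lie U_{SU(φ_b),ν}`
    (hU : {x : Module.End K M | x ∈ g ∧ InPosPart D x} =
      {x : Module.End K M | ∃ xa ∈ {y : Module.End K M | SkewAdjEnd Bf y ∧ InPosPart D y ∧
          (∀ v ∈ Mb0, y v = 0) ∧ ∀ v : M, y v ∈ Ma0 ⊔ Submodule.span K {w, w'}},
        ∃ xb ∈ {y : Module.End K M | SkewAdjEnd Bf y ∧ InPosPart D y ∧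
          (∀ v ∈ Wb, y v ∈ Wb) ∧ (∀ v ∈ Wb', y v ∈ Wb') ∧ ∀ v ∈ Ma0, y v = 0},
        x = xa + xb}) :
    (Ma0 = ⊥ ∧ (g : Set (Module.End K M)) =
        {y : Module.End K M | SkewAdjEnd Bf y ∧ (∀ v ∈ Wb, y v ∈ Wb) ∧
          (∀ v ∈ Wb', y v ∈ Wb') ∧ ∀ v ∈ Ma0, y v = 0}) ∨
    (Mb0 = ⊥ ∧ (g : Set (Module.End K M)) = {y : Module.End K M | SkewAdjEnd Bf y}) := by
  have hP : IsHyperbolicPair Bf w w' := ⟨hsymm, hww, hw'w', hww'⟩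
  have hM0 : Ma0 ⊔ Mb0 = pairOrth Bf w w' :=
    hP.eq_pairOrth_of_isCompl (sup_le (fun v hv => horta v hv) fun v hv => hortb v hv) hcompl
  obtain rfl := hP.eq_wedge hM0 hDw hDw' hDa hDb
  have hg : IsSkewLieSubalgebra Bf g := ⟨hgbracket, hgso⟩
  have hUeq : wedgeSpace Bf g w w' = Ma0 ⊔ Wb ⊓ Mb0 :=
    le_antisymm (hP.wedgeSpace_le_sup hM0 hwWb hWb0 hU.subset)
      (hP.sup_le_wedgeSpace hM0 hortab hw'Wb' hWbiso hWb'iso hU.superset)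
  have hsplit := hP.le_inf_sup_inf (hM0 ▸ le_sup_right) hWbsum hWb0 hWb'0
  have hMb0 := hP.eq_zero_of_mem_summand hnd hM0 hortab
  have hLevi' : ∀ y ∈ g, ⁅wedge Bf w w', y⁆ = 0 →
      (∀ m ∈ Mb0, y m ∈ Mb0) ∧ ∀ m ∈ Wb' ⊓ Mb0, y m ∈ Wb' ⊓ Mb0 := fun y hy h => by
    obtain ⟨c, xa, ⟨-, hxa, -⟩, xb, ⟨-, -, -, -, hbW, hbW'⟩, rfl⟩ := hLevi y hy h
    exact mapsTo_smul_wedge_add_add (hM0 ▸ le_sup_right) hsplit c hxa hbW hbW'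
  by_cases hMa : Ma0 = ⊥
  · have hMb : Mb0 = pairOrth Bf w w' := by rw [← hM0, hMa, bot_sup_eq]
    have hL : IsLagrangianSplitting Bf Wb Wb' :=
      ⟨hWbiso, hWb'iso, by rw [hWbsum, ← hcompl.sup_eq_top, hMa, bot_sup_eq]⟩
    refine Or.inl ⟨hMa, ?_⟩
    rw [hP.coe_eq_setOf_mapsTo hnd hg hDg hred hL hwWb hw'Wb'
      (by rw [hUeq, hMa, bot_sup_eq, hMb]) fun y hy h => hMb ▸ (hLevi' y hy h).2]
    ext y
    simp [hMa]
  · have hWMb := hP.wedgeSpace_inf_eq_bot hg hDg hred hortab hdisj hMb0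
      (fun y hy h => (hLevi' y hy h).1) (by rwa [hUeq, inf_sup_self])
    have hMb : Mb0 = ⊥ := eq_bot_of_inf_eq_bot hsplit hWb'iso hMb0
      (eq_bot_iff.mpr (hWMb ▸ le_inf (le_sup_right.trans hUeq.ge) inf_le_right))
    refine Or.inr ⟨hMb, hP.coe_eq_setOf_skewAdjEnd hnd hg hDg hred ?_ ?_⟩
    · rw [hUeq, ← hM0, hMb, inf_bot_eq, sup_bot_eq]
    · rwa [← hM0, hMb, sup_bot_eq]

/-- (Lemma 4.3 of the paper, Lie-algebra formulation.)  Let `(M, Q')` be a nondegenerate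
quadratic space over an algebraically closed field of characteristic `0` with orthogonal
decomposition `M = M_{a,0} ⊕ M_{b,0} ⊕ B`, `B` a hyperbolic plane with isotropic basis
`w, w'`, and `ν(t) = diag(t⁻¹, 1, …, 1, t)` with derivative `D`.  Suppose
`M_b = M_{b,0} ⊕ B` carries a (split) Hermitian structure respecting `Q'|_{M_b}`, given by
mutually dual maximal totally isotropic subspaces `W_b ∋ w` and `W_b' ∋ w'`.  If
`g ⊆ so(M)` is a (connected) reductive subalgebra containing `D` such that
(1) its Levi part relative to `D` lies in `K·D ⊕ so(M_{a,0}) ⊕ su(φ_{b,0})`, and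
(2) its positive unipotent part equals `Lie U_{SO(M_a), ν} ⊕ Lie U_{SU(φ_b), ν}`,
then either `M_{a,0} = 0` and `g = su(φ_b)`, or `M_{b,0} = 0` and `g = so(M)`. -/
theorem stmt_16 {K M : Type*} [Field K] [IsAlgClosed K] [CharZero K]
    [AddCommGroup M] [Module K M] [FiniteDimensional K M]
    (Bf : M →ₗ[K] M →ₗ[K] K) (hsymm : ∀ u v, Bf u v = Bf v u)
    (hnd : ∀ u : M, (∀ v, Bf u v = 0) → u = 0)
    (Ma0 Mb0 : Submodule K M) (w w' : M)
    (hww : Bf w w = 0) (hw'w' : Bf w' w' = 0) (hww' : Bf w w' = 1)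
    (horta : ∀ v ∈ Ma0, Bf w v = 0 ∧ Bf w' v = 0)
    (hortb : ∀ v ∈ Mb0, Bf w v = 0 ∧ Bf w' v = 0)
    (hortab : ∀ va ∈ Ma0, ∀ vb ∈ Mb0, Bf va vb = 0)
    (hdisj : Disjoint Ma0 Mb0)
    (hcompl : IsCompl (Submodule.span K {w, w'}) (Ma0 ⊔ Mb0))
    -- the Hermitian structure on `M_b`: mutually dual maximal isotropic subspaces
    (Wb Wb' : Submodule K M)
    (hwWb : w ∈ Wb) (hw'Wb' : w' ∈ Wb')
    (hWbiso : ∀ x ∈ Wb, ∀ y ∈ Wb, Bf x y = 0)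
    (hWb'iso : ∀ x ∈ Wb', ∀ y ∈ Wb', Bf x y = 0)
    (hWbdisj : Disjoint Wb Wb')
    (hWbsum : Wb ⊔ Wb' = Submodule.span K {w, w'} ⊔ Mb0)
    (hWb0 : Wb = (Wb ⊓ Mb0) ⊔ Submodule.span K {w})
    (hWb'0 : Wb' = (Wb' ⊓ Mb0) ⊔ Submodule.span K {w'})
    -- the derivative `D` of the cocharacter `ν`
    (D : Module.End K M) (hDw : D w = -w) (hDw' : D w' = w')
    (hDa : ∀ v ∈ Ma0, D v = 0) (hDb : ∀ v ∈ Mb0, D v = 0)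
    -- `g` is a reductive Lie subalgebra of `so(M)` containing `im ν`
    (g : Submodule K (Module.End K M))
    (hgbracket : ∀ x ∈ g, ∀ y ∈ g, ⁅x, y⁆ ∈ g)
    (hgso : ∀ x ∈ g, SkewAdjEnd Bf x)
    (hDg : D ∈ g)
    (hred : ∀ N : Submodule K M, (∀ x ∈ g, ∀ v ∈ N, x v ∈ N) →
      ∃ N' : Submodule K M, IsCompl N N' ∧ ∀ x ∈ g, ∀ v ∈ N', x v ∈ N')
    -- (1) the Levi of `g` relative to `ν` lies in `K·D ⊕ so(M_{a,0}) ⊕ su(φ_{b,0})`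
    (hLevi : ∀ x ∈ g, ⁅D, x⁆ = 0 →
      ∃ c : K, ∃ xa ∈ {y : Module.End K M | SkewAdjEnd Bf y ∧ (∀ v ∈ Mb0, y v = 0) ∧
          y w = 0 ∧ y w' = 0 ∧ ∀ v ∈ Ma0, y v ∈ Ma0},
        ∃ xb ∈ {y : Module.End K M | SkewAdjEnd Bf y ∧ (∀ v ∈ Ma0, y v = 0) ∧
          y w = 0 ∧ y w' = 0 ∧ (∀ v ∈ Wb ⊓ Mb0, y v ∈ Wb ⊓ Mb0) ∧
          ∀ v ∈ Wb' ⊓ Mb0, y v ∈ Wb' ⊓ Mb0},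
        x = c • D + xa + xb)
    -- (2) the unipotent part of `g` is `Lie U_{SO(M_a),ν} ⊕ Lie U_{SU(φ_b),ν}`
    (hU : {x : Module.End K M | x ∈ g ∧ InPosPart D x} =
      {x : Module.End K M | ∃ xa ∈ {y : Module.End K M | SkewAdjEnd Bf y ∧ InPosPart D y ∧
          (∀ v ∈ Mb0, y v = 0) ∧ ∀ v : M, y v ∈ Ma0 ⊔ Submodule.span K {w, w'}},
        ∃ xb ∈ {y : Module.End K M | SkewAdjEnd Bf y ∧ InPosPart D y ∧
          (∀ v ∈ Wb, y v ∈ Wb) ∧ (∀ v ∈ Wb', y v ∈ Wb') ∧ ∀ v ∈ Ma0, y v = 0},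
        x = xa + xb}) :
    (Ma0 = ⊥ ∧ (g : Set (Module.End K M)) =
        {y : Module.End K M | SkewAdjEnd Bf y ∧ (∀ v ∈ Wb, y v ∈ Wb) ∧
          (∀ v ∈ Wb', y v ∈ Wb') ∧ ∀ v ∈ Ma0, y v = 0}) ∨
    (Mb0 = ⊥ ∧ (g : Set (Module.End K M)) = {y : Module.End K M | SkewAdjEnd Bf y}) :=
  stmt_16_general Bf hsymm hnd Ma0 Mb0 w w' hww hw'w' hww' horta hortb hortab hdisj hcompl Wb Wb'
    hwWb hw'Wb' hWbiso hWb'iso hWbsum hWb0 hWb'0 D hDw hDw' hDa hDb g hgbracket hgso hDg hred hLevi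
    hU
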